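/- Let X be a real random variable with E[exp(μX)] ≤ exp(μ²ε²/2) for all μ ∈ ℝ, for some ε > 0. Then |E[e^X] − 1 − E[X] − E[X²]/2| ≤ 2ε³ e^{ε²} and |E[X e^X] − E[X] − E[X²]| ≤ 5ε³ e^{ε²}. -/

import Mathlib

/-!
Taylor's theorem with the Lagrange remainder gives, for every real `x`,
`-|x|³/6 ≤ eˣ - 1 - x - x²/2 ≤ |x|³eˣ/6` and `-|x|³/2 ≤ xeˣ - x - x² ≤ |x|³eˣ/2`, so both errors
are controlled by `E|X|³` and `E[|X|³e^X]`. By Cauchy–Schwarz these are at most `√E[X⁶]` and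
`√E[X⁶] · √E[e^{2X}] ≤ √E[X⁶] · e^{ε²}`, and the sixth moment of a sub-Gaussian variable is at most
`100 ε⁶`, by integrating `x⁶/6! ≤ cosh x - 1` at `x = 2X/ε`. The constants come out as
`10/6 ≤ 2` and `10/2 = 5`.
-/

open Real Finset MeasureTheory ProbabilityTheory
open scoped Nat NNReal

namespace Real

theorem exists_exp_sub_sum_range_eq (x : ℝ) (n : ℕ) :
    ∃ ξ ∈ Set.uIcc 0 x, exp x - ∑ i ∈ range n, x ^ i / i ! = exp ξ * x ^ n / n ! := by
  rcases eq_or_ne x 0 with rfl | hx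
  · exact ⟨0, by simp, by cases n <;> simp [sum_range_succ']⟩
  obtain _ | n := n
  · exact ⟨x, Set.right_mem_uIcc, by simp⟩
  have hderiv (k : ℕ) : iteratedDeriv k exp = exp := by
    rw [iteratedDeriv_eq_iterate, iter_deriv_exp]
  obtain ⟨ξ, hξ, h⟩ :=
    taylor_mean_remainder_lagrange_iteratedDeriv hx.symm (n := n) contDiff_exp.contDiffOn
  refine ⟨ξ, Set.uIoo_subset_uIcc_self hξ, ?_⟩
  rw [hderiv, sub_zero] at h
  rw [← h, taylor_within_apply]
  congr 1
  refine sum_congr rfl fun k _ ↦ ?_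
  rw [iteratedDerivWithin_eq_iteratedDeriv (uniqueDiffOn_uIcc hx.symm) contDiff_exp.contDiffAt
    Set.left_mem_uIcc, hderiv]
  simp [div_eq_inv_mul]

lemma neg_abs_pow_three_le_exp_mul_pow_three {x ξ : ℝ} (hξ : ξ ∈ Set.uIcc 0 x) :
    -|x| ^ 3 ≤ exp ξ * x ^ 3 := by
  rcases le_total 0 x with hx | hx
  · have : 0 ≤ exp ξ * x ^ 3 := by positivity
    linarith [pow_nonneg (abs_nonneg x) 3]
  · rw [Set.uIcc_of_ge hx] at hξ
    have : exp ξ ≤ 1 := exp_le_one_iff.mpr hξ.2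
    rw [abs_of_nonpos hx]
    nlinarith [pow_nonneg (neg_nonneg.mpr hx) 3]

lemma exp_mul_pow_three_le_abs_pow_three_mul_exp {x ξ : ℝ} (hξ : ξ ∈ Set.uIcc 0 x) :
    exp ξ * x ^ 3 ≤ |x| ^ 3 * exp x := by
  rcases le_total 0 x with hx | hx
  · rw [Set.uIcc_of_le hx] at hξ
    rw [abs_of_nonneg hx, mul_comm]
    gcongr
    exact hξ.2
  · have : exp ξ * x ^ 3 ≤ 0 :=
      mul_nonpos_of_nonneg_of_nonpos (exp_pos ξ).le (Odd.pow_nonpos (by decide) hx)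
    linarith [show 0 ≤ |x| ^ 3 * exp x by positivity]

lemma exp_sub_quadratic_mem_Icc (x : ℝ) :
    exp x - 1 - x - x ^ 2 / 2 ∈ Set.Icc (-|x| ^ 3 / 6) (|x| ^ 3 * exp x / 6) := by
  obtain ⟨ξ, hξ, h⟩ := exists_exp_sub_sum_range_eq x 3
  have hsum : ∑ i ∈ range 3, x ^ i / (i ! : ℝ) = 1 + x + x ^ 2 / 2 := by
    norm_num [sum_range_succ, Nat.factorial]
  have hrem : exp x - 1 - x - x ^ 2 / 2 = exp ξ * x ^ 3 / 6 := by
    rw [hsum, show ((3 ! : ℕ) : ℝ) = 6 by norm_num [Nat.factorial]] at h; linarith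
  rw [hrem]
  exact ⟨by linarith [neg_abs_pow_three_le_exp_mul_pow_three hξ],
    by linarith [exp_mul_pow_three_le_abs_pow_three_mul_exp hξ]⟩

lemma mul_exp_sub_mem_Icc (x : ℝ) :
    x * exp x - x - x ^ 2 ∈ Set.Icc (-|x| ^ 3 / 2) (|x| ^ 3 * exp x / 2) := by
  obtain ⟨ξ, hξ, h⟩ := exists_exp_sub_sum_range_eq x 2
  have hrem : x * exp x - x - x ^ 2 = exp ξ * x ^ 3 / 2 := by
    have hsum : ∑ i ∈ range 2, x ^ i / (i ! : ℝ) = 1 + x := by norm_num [sum_range_succ]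
    have : exp x - 1 - x = exp ξ * x ^ 2 / 2 := by
      rw [hsum, show ((2 ! : ℕ) : ℝ) = 2 by norm_num [Nat.factorial]] at h; linarith
    linear_combination x * this
  rw [hrem]
  exact ⟨by linarith [neg_abs_pow_three_le_exp_mul_pow_three hξ],
    by linarith [exp_mul_pow_three_le_abs_pow_three_mul_exp hξ]⟩

lemma pow_two_mul_div_factorial_le_cosh_sub_one {k : ℕ} (hk : k ≠ 0) (x : ℝ) :
    x ^ (2 * k) / (2 * k)! ≤ cosh x - 1 := by
  have h := sum_le_hasSum {0, k} (fun n _ ↦ by rw [pow_mul]; positivity) (hasSum_cosh x)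
  rw [sum_pair hk.symm] at h
  simp only [mul_zero, pow_zero, Nat.factorial_zero, Nat.cast_one, div_one] at h
  linarith

end Real

namespace MeasureTheory

variable {Ω : Type*} [MeasurableSpace Ω] {μ : Measure Ω}

lemma integral_mul_le_of_integral_sq_le {f g : Ω → ℝ} {a b : ℝ} (ha : 0 < a) (hb : 0 < b)
    (hfg : Integrable (fun ω ↦ f ω * g ω) μ) (hf : Integrable (fun ω ↦ f ω ^ 2) μ)
    (hg : Integrable (fun ω ↦ g ω ^ 2) μ) (hfa : ∫ ω, f ω ^ 2 ∂μ ≤ a ^ 2)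
    (hgb : ∫ ω, g ω ^ 2 ∂μ ≤ b ^ 2) :
    ∫ ω, f ω * g ω ∂μ ≤ a * b := by
  have hamgm (ω : Ω) : f ω * g ω ≤ (b / a * f ω ^ 2 + a / b * g ω ^ 2) / 2 := by
    have : 0 ≤ (b * f ω - a * g ω) ^ 2 / (a * b) := by positivity
    field_simp at this ⊢
    nlinarith [this]
  calc ∫ ω, f ω * g ω ∂μ ≤ ∫ ω, (b / a * f ω ^ 2 + a / b * g ω ^ 2) / 2 ∂μ :=
        integral_mono hfg (((hf.const_mul _).add (hg.const_mul _)).div_const 2) hamgm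
    _ = (b / a * ∫ ω, f ω ^ 2 ∂μ + a / b * ∫ ω, g ω ^ 2 ∂μ) / 2 := by
        rw [integral_div, integral_add (hf.const_mul _) (hg.const_mul _), integral_const_mul,
          integral_const_mul]
    _ ≤ (b / a * a ^ 2 + a / b * b ^ 2) / 2 := by gcongr
    _ = a * b := by field_simp; ring

lemma abs_integral_le_of_neg_le_of_le {f g h : Ω → ℝ} {C : ℝ} (hf : Integrable f μ)
    (hg : Integrable g μ) (hh : Integrable h μ) (hgf : ∀ ω, -g ω ≤ f ω) (hfh : ∀ ω, f ω ≤ h ω)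
    (hgC : ∫ ω, g ω ∂μ ≤ C) (hhC : ∫ ω, h ω ∂μ ≤ C) :
    |∫ ω, f ω ∂μ| ≤ C := by
  have hlow : -∫ ω, g ω ∂μ ≤ ∫ ω, f ω ∂μ := by
    rw [← integral_neg]; exact integral_mono hg.neg hf hgf
  exact abs_le.mpr ⟨by linarith, (integral_mono hf hh hfh).trans hhC⟩

end MeasureTheory

namespace ProbabilityTheory.HasSubgaussianMGF

variable {Ω : Type*} [MeasurableSpace Ω] {μ : Measure Ω} {X : Ω → ℝ} {c : ℝ≥0}

lemma integrable_pow_mul_exp (h : HasSubgaussianMGF X c μ) (n : ℕ) (t : ℝ) :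
    Integrable (fun ω ↦ X ω ^ n * exp (t * X ω)) μ :=
  integrable_pow_mul_exp_of_mem_interior_integrableExpSet (by simp [h.integrableExpSet_eq_univ]) n

lemma integrable_pow_abs_mul_exp (h : HasSubgaussianMGF X c μ) (n : ℕ) (t : ℝ) :
    Integrable (fun ω ↦ |X ω| ^ n * exp (t * X ω)) μ :=
  integrable_pow_abs_mul_exp_of_mem_interior_integrableExpSet
    (by simp [h.integrableExpSet_eq_univ]) n

lemma integrable_pow (h : HasSubgaussianMGF X c μ) (n : ℕ) :
    Integrable (fun ω ↦ X ω ^ n) μ := by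
  simpa using h.integrable_pow_mul_exp n 0

lemma integrable_pow_abs (h : HasSubgaussianMGF X c μ) (n : ℕ) :
    Integrable (fun ω ↦ |X ω| ^ n) μ := by
  simpa using h.integrable_pow_abs_mul_exp n 0

lemma integrable_exp_neg_mul (h : HasSubgaussianMGF X c μ) (t : ℝ) :
    Integrable (fun ω ↦ exp (-(t * X ω))) μ := by
  simpa [neg_mul] using h.integrable_exp_mul (-t)

lemma integrable_cosh_mul (h : HasSubgaussianMGF X c μ) (t : ℝ) :
    Integrable (fun ω ↦ cosh (t * X ω)) μ := by
  simp_rw [cosh_eq]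
  exact ((h.integrable_exp_mul t).add (h.integrable_exp_neg_mul t)).div_const 2

lemma integral_cosh_mul_le (h : HasSubgaussianMGF X c μ) (t : ℝ) :
    ∫ ω, cosh (t * X ω) ∂μ ≤ exp (c * t ^ 2 / 2) := by
  have hneg : ∫ ω, exp (-(t * X ω)) ∂μ ≤ exp (c * t ^ 2 / 2) := by
    simpa [mgf, neg_mul] using h.mgf_le (-t)
  have hpos : ∫ ω, exp (t * X ω) ∂μ ≤ exp (c * t ^ 2 / 2) := h.mgf_le t
  simp_rw [cosh_eq]
  rw [integral_div, integral_add (h.integrable_exp_mul t) (h.integrable_exp_neg_mul t)]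
  linarith

lemma integrable_sq_abs_pow_three (h : HasSubgaussianMGF X c μ) :
    Integrable (fun ω ↦ (|X ω| ^ 3) ^ 2) μ := by
  simpa [← pow_mul] using h.integrable_pow_abs 6

variable [IsProbabilityMeasure μ]

lemma integral_pow_two_mul_le (h : HasSubgaussianMGF X c μ) {k : ℕ} (hk : k ≠ 0) {t : ℝ}
    (ht : t ≠ 0) :
    ∫ ω, X ω ^ (2 * k) ∂μ ≤ (2 * k)! / t ^ (2 * k) * (exp (c * t ^ 2 / 2) - 1) := by
  have htk : 0 < t ^ (2 * k) := by rw [pow_mul]; positivity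
  have hpt (ω : Ω) : X ω ^ (2 * k) ≤ (2 * k)! / t ^ (2 * k) * (cosh (t * X ω) - 1) := by
    have := pow_two_mul_div_factorial_le_cosh_sub_one hk (t * X ω)
    rw [mul_pow, div_le_iff₀ (by positivity)] at this
    rw [div_mul_eq_mul_div, le_div_iff₀ htk]
    linarith
  calc ∫ ω, X ω ^ (2 * k) ∂μ ≤ ∫ ω, (2 * k)! / t ^ (2 * k) * (cosh (t * X ω) - 1) ∂μ :=
        integral_mono (h.integrable_pow (2 * k))
          (((h.integrable_cosh_mul t).sub (integrable_const 1)).const_mul _) hpt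
    _ = (2 * k)! / t ^ (2 * k) * (∫ ω, cosh (t * X ω) ∂μ - 1) := by
        rw [integral_const_mul, integral_sub (h.integrable_cosh_mul t) (integrable_const 1)]
        simp
    _ ≤ (2 * k)! / t ^ (2 * k) * (exp (c * t ^ 2 / 2) - 1) := by
        gcongr
        exact h.integral_cosh_mul_le t

lemma integral_pow_six_le (h : HasSubgaussianMGF X c μ) (hc : 0 < c) :
    ∫ ω, X ω ^ 6 ∂μ ≤ 100 * c ^ 3 := by
  have hc' : (0 : ℝ) < c := hc
  have hsq : (2 / √c : ℝ) ^ 2 = 4 / c := by rw [div_pow, sq_sqrt hc'.le]; norm_num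
  have h6 := h.integral_pow_two_mul_le (k := 3) (by norm_num) (t := 2 / √c) (by positivity)
  rw [pow_mul, hsq, show c * (4 / c : ℝ) / 2 = 2 by field_simp; ring] at h6
  have he : exp 2 < 9 := by
    rw [show (2 : ℝ) = 1 + 1 by norm_num, exp_add]
    nlinarith [exp_pos 1, exp_one_lt_three]
  calc ∫ ω, X ω ^ 6 ∂μ ≤ _ := h6
    _ = 45 / 4 * (exp 2 - 1) * c ^ 3 := by field_simp; norm_num; ring
    _ ≤ 100 * c ^ 3 := by gcongr; linarith

lemma integral_sq_abs_pow_three_le (h : HasSubgaussianMGF X c μ) (hc : 0 < c) :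
    ∫ ω, (|X ω| ^ 3) ^ 2 ∂μ ≤ (10 * √c ^ 3) ^ 2 := by
  simp_rw [← pow_mul, Even.pow_abs ⟨3, rfl⟩]
  exact (h.integral_pow_six_le hc).trans_eq (by
    rw [mul_pow, ← pow_mul, show 3 * 2 = 2 * 3 from rfl, pow_mul, sq_sqrt c.coe_nonneg]; norm_num)

lemma integral_abs_pow_three_mul_exp_le (h : HasSubgaussianMGF X c μ) (hc : 0 < c) :
    ∫ ω, |X ω| ^ 3 * exp (X ω) ∂μ ≤ 10 * √c ^ 3 * exp c := by
  have hexp (ω : Ω) : exp (X ω) ^ 2 = exp (2 * X ω) := by rw [← exp_nat_mul]; norm_num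
  refine integral_mul_le_of_integral_sq_le (by positivity) (exp_pos _)
    (by simpa using h.integrable_pow_abs_mul_exp 3 1) h.integrable_sq_abs_pow_three ?_
    (h.integral_sq_abs_pow_three_le hc) ?_
  · simpa [hexp] using h.integrable_exp_mul 2
  · simp_rw [hexp, ← exp_nat_mul]
    exact (h.mgf_le 2).trans_eq (by norm_num; ring_nf)

lemma integral_abs_pow_three_le (h : HasSubgaussianMGF X c μ) (hc : 0 < c) :
    ∫ ω, |X ω| ^ 3 ∂μ ≤ 10 * √c ^ 3 := by
  simpa using integral_mul_le_of_integral_sq_le (g := fun _ ↦ 1) (b := 1) (by positivity) one_pos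
    (by simpa using h.integrable_pow_abs 3) h.integrable_sq_abs_pow_three
    (integrable_const _) (h.integral_sq_abs_pow_three_le hc) (by simp)

lemma abs_integral_comp_le_of_mem_Icc (h : HasSubgaussianMGF X c μ) (hc : 0 < c) {f : ℝ → ℝ}
    {K : ℝ} (hK : 0 < K) (hfX : Integrable (fun ω ↦ f (X ω)) μ)
    (hf : ∀ x, f x ∈ Set.Icc (-|x| ^ 3 / K) (|x| ^ 3 * exp x / K)) :
    |∫ ω, f (X ω) ∂μ| ≤ 10 / K * √c ^ 3 * exp c := by
  have h3e : Integrable (fun ω ↦ |X ω| ^ 3 * exp (X ω)) μ := by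
    simpa using h.integrable_pow_abs_mul_exp 3 1
  refine abs_integral_le_of_neg_le_of_le hfX ((h.integrable_pow_abs 3).div_const K)
    (h3e.div_const K) (fun ω ↦ by simpa [neg_div] using (hf (X ω)).1) (fun ω ↦ (hf (X ω)).2) ?_ ?_
  all_goals rw [integral_div, div_le_iff₀ hK]
  · calc ∫ ω, |X ω| ^ 3 ∂μ ≤ 10 * √c ^ 3 := h.integral_abs_pow_three_le hc
      _ ≤ 10 * √c ^ 3 * exp c := le_mul_of_one_le_right (by positivity) (one_le_exp c.coe_nonneg)
      _ = _ := by field_simp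
  · exact (h.integral_abs_pow_three_mul_exp_le hc).trans_eq (by field_simp)

end ProbabilityTheory.HasSubgaussianMGF

/-- If `X` satisfies `E[exp(μX)] ≤ exp(μ²ε²/2)` for all real `μ`
(`ε > 0`), then `|E[e^X] − 1 − E[X] − E[X²]/2| ≤ 2ε³e^{ε²}` and
`|E[X e^X] − E[X] − E[X²]| ≤ 5ε³e^{ε²}`. -/
theorem exp_moment_expansion
    {Ω : Type*} [MeasurableSpace Ω] (P : Measure Ω) [IsProbabilityMeasure P]
    (X : Ω → ℝ) (ε : ℝ) (hε : 0 < ε)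
    (hint : ∀ μ : ℝ, Integrable (fun ω => Real.exp (μ * X ω)) P)
    (hmgf : ∀ μ : ℝ, ∫ ω, Real.exp (μ * X ω) ∂P ≤ Real.exp (μ ^ 2 * ε ^ 2 / 2)) :
    |(∫ ω, Real.exp (X ω) ∂P) - 1 - (∫ ω, X ω ∂P) - (∫ ω, X ω ^ 2 ∂P) / 2|
        ≤ 2 * ε ^ 3 * Real.exp (ε ^ 2) ∧
    |(∫ ω, X ω * Real.exp (X ω) ∂P) - (∫ ω, X ω ∂P) - ∫ ω, X ω ^ 2 ∂P|
        ≤ 5 * ε ^ 3 * Real.exp (ε ^ 2) := by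
  have hc2 : ((ε ^ 2).toNNReal : ℝ) = ε ^ 2 := Real.coe_toNNReal _ (sq_nonneg ε)
  have hX : HasSubgaussianMGF X (ε ^ 2).toNNReal P :=
    ⟨hint, fun t ↦ (hmgf t).trans_eq (by rw [hc2]; ring_nf)⟩
  have hc : 0 < (ε ^ 2).toNNReal := Real.toNNReal_pos.mpr (by positivity)
  have hXi := hX.integrable
  have hX2 := hX.integrable_pow 2
  have hXe : Integrable (fun ω ↦ exp (X ω)) P := by simpa using hint 1
  have hXXe : Integrable (fun ω ↦ X ω * exp (X ω)) P := by
    simpa using hX.integrable_pow_mul_exp 1 1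
  have hXe1 : Integrable (fun ω ↦ exp (X ω) - 1) P := hXe.sub (integrable_const 1)
  have hXe1X : Integrable (fun ω ↦ exp (X ω) - 1 - X ω) P := hXe1.sub hXi
  have hXXeX : Integrable (fun ω ↦ X ω * exp (X ω) - X ω) P := hXXe.sub hXi
  constructor
  · have h := hX.abs_integral_comp_le_of_mem_Icc hc (f := fun x ↦ exp x - 1 - x - x ^ 2 / 2)
      (by norm_num) (hXe1X.sub (hX2.div_const 2)) exp_sub_quadratic_mem_Icc
    rw [integral_sub hXe1X (hX2.div_const 2), integral_sub hXe1 hXi,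
      integral_sub hXe (integrable_const 1), integral_div, integral_const, probReal_univ,
      one_smul, hc2, sqrt_sq hε.le] at h
    exact h.trans (by gcongr; norm_num)
  · have h := hX.abs_integral_comp_le_of_mem_Icc hc (f := fun x ↦ x * exp x - x - x ^ 2)
      (by norm_num) (hXXeX.sub hX2) mul_exp_sub_mem_Icc
    rw [integral_sub hXXeX hX2, integral_sub hXXe hXi, hc2, sqrt_sq hε.le] at h
    exact h.trans_eq (by norm_num)
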